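/- For every cograph (V, E), there exist d < ω and an injective function f : V → (2²)^d such that for all distinct v₀, v₁ ∈ V: v₀ E v₁ holds if and only if {f(v₀), f(v₁)} is an up-1-comb, and ¬(v₀ E v₁) holds if and only if {f(v₀), f(v₁)} is a wide right-1-comb. -/

import Mathlib

/-!
Induct on the cograph, carrying representations in all large dimensions so that both sides of
a union or join can be taken in the same one. Representations of `G` and `H` in `(2²)^d` give
one of their disjoint union (resp. join) in `(2²)^(d+1)` by prefixing the vertices of `G` with
`(0,0)` and those of `H` with `(1,0)` (resp. `(0,1)`): within a side the common first letter is
invisible, and across sides the first letters already differ, in the first (resp. only the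
second) coordinate. Non-edges are then wide right-1-combs for free, since two distinct
sequences form exactly one of the two kinds of comb, read off at their first difference.
-/

/-- The index square `2²`. -/
abbrev Sq : Type := Fin 2 × Fin 2

/-- `{σ, τ}` is an up-1-comb: at the end of the longest common prefix the two
sequences have the same first coordinate and different second coordinates. -/
def UpPair {d : ℕ} (σ τ : Fin d → Sq) : Prop :=
  ∃ t : Fin d, (∀ s, s < t → σ s = τ s) ∧ (σ t).1 = (τ t).1 ∧ (σ t).2 ≠ (τ t).2

/-- `{σ, τ}` is a wide right-1-comb: at the end of the longest common prefix the
two sequences have different first coordinates. -/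
def WidePair {d : ℕ} (σ τ : Fin d → Sq) : Prop :=
  ∃ t : Fin d, (∀ s, s < t → σ s = τ s) ∧ (σ t).1 ≠ (τ t).1

/-- Auxiliary relation for the disjoint union of two graphs. -/
def sumRel {V W : Type} (G : SimpleGraph V) (H : SimpleGraph W) : V ⊕ W → V ⊕ W → Prop
  | .inl v, .inl v' => G.Adj v v'
  | .inr w, .inr w' => H.Adj w w'
  | _, _ => False

/-- Disjoint union (coproduct) of two simple graphs. -/
def sumGraph {V W : Type} (G : SimpleGraph V) (H : SimpleGraph W) : SimpleGraph (V ⊕ W) :=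
  SimpleGraph.fromRel (sumRel G H)

/-- Auxiliary relation for the join of two graphs. -/
def joinRel {V W : Type} (G : SimpleGraph V) (H : SimpleGraph W) : V ⊕ W → V ⊕ W → Prop
  | .inl v, .inl v' => G.Adj v v'
  | .inr w, .inr w' => H.Adj w w'
  | _, _ => True

/-- Graph join of two simple graphs: disjoint union plus all cross edges. -/
def joinGraph {V W : Type} (G : SimpleGraph V) (H : SimpleGraph W) : SimpleGraph (V ⊕ W) :=
  SimpleGraph.fromRel (joinRel G H)

/-- Cographs: the smallest class of graphs (up to isomorphism) containing the
one-vertex graph and closed under disjoint unions and graph joins. -/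
inductive IsCograph : {V : Type} → SimpleGraph V → Prop
  | single : IsCograph (⊥ : SimpleGraph PUnit)
  | iso {V W : Type} {G : SimpleGraph V} {H : SimpleGraph W} (e : G ≃g H) :
      IsCograph G → IsCograph H
  | coprod {V W : Type} {G : SimpleGraph V} {H : SimpleGraph W} :
      IsCograph G → IsCograph H → IsCograph (sumGraph G H)
  | join {V W : Type} {G : SimpleGraph V} {H : SimpleGraph W} :
      IsCograph G → IsCograph H → IsCograph (joinGraph G H)

open Function Filter

section Combs

variable {d : ℕ}

theorem upPair_comm {σ τ : Fin d → Sq} : UpPair σ τ ↔ UpPair τ σ := by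
  simp only [UpPair, eq_comm, ne_comm]

theorem upPair_cons_iff {a b : Sq} {x y : Fin d → Sq} :
    UpPair (Fin.cons a x) (Fin.cons b y) ↔ (a.1 = b.1 ∧ a.2 ≠ b.2) ∨ (a = b ∧ UpPair x y) := by
  constructor
  · rintro ⟨t, hlt, h1, h2⟩
    cases t using Fin.cases with
    | zero => exact .inl ⟨h1, h2⟩
    | succ t =>
      refine .inr ⟨hlt 0 t.succ_pos, t, fun s hs => ?_, h1, h2⟩
      simpa using hlt s.succ (Fin.succ_lt_succ_iff.2 hs)
  · rintro (⟨h1, h2⟩ | ⟨rfl, t, hlt, h1, h2⟩)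
    · exact ⟨0, fun s hs => absurd hs (Fin.not_lt_zero s), h1, h2⟩
    · refine ⟨t.succ, fun s hs => ?_, h1, h2⟩
      cases s using Fin.cases with
      | zero => rfl
      | succ s => exact hlt s (Fin.succ_lt_succ_iff.1 hs)

theorem upPair_or_widePair {σ τ : Fin d → Sq} (h : σ ≠ τ) : UpPair σ τ ∨ WidePair σ τ := by
  obtain ⟨t, ht, hmin⟩ := wellFounded_lt.has_min {i | σ i ≠ τ i} (Function.ne_iff.1 h)
  have hlt : ∀ s < t, σ s = τ s := fun s hs => not_not.1 fun hne => hmin s hne hs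
  by_cases h1 : (σ t).1 = (τ t).1
  · exact .inl ⟨t, hlt, h1, fun h2 => ht (Prod.ext h1 h2)⟩
  · exact .inr ⟨t, hlt, h1⟩

theorem not_upPair_of_widePair {σ τ : Fin d → Sq} : WidePair σ τ → ¬ UpPair σ τ := by
  rintro ⟨t', hlt', h1'⟩ ⟨t, hlt, h1, h2⟩
  rcases lt_trichotomy t t' with h | rfl | h
  · exact h2 (congrArg Prod.snd (hlt' t h))
  · exact h1' h1
  · exact h1' (congrArg Prod.fst (hlt t' h))

theorem widePair_iff_not_upPair {σ τ : Fin d → Sq} (h : σ ≠ τ) : WidePair σ τ ↔ ¬ UpPair σ τ :=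
  ⟨not_upPair_of_widePair, (upPair_or_widePair h).resolve_left⟩

end Combs

namespace SimpleGraph

variable {V W : Type} {G : SimpleGraph V} {H : SimpleGraph W} {v v' : V} {w w' : W}

@[simp]
theorem sumGraph_adj_inl_inl : (sumGraph G H).Adj (.inl v) (.inl v') ↔ G.Adj v v' := by
  simpa [sumGraph, sumRel, G.adj_comm] using G.ne_of_adj

@[simp]
theorem sumGraph_adj_inr_inr : (sumGraph G H).Adj (.inr w) (.inr w') ↔ H.Adj w w' := by
  simpa [sumGraph, sumRel, H.adj_comm] using H.ne_of_adj

@[simp]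
theorem sumGraph_not_adj_inl_inr : ¬ (sumGraph G H).Adj (.inl v) (.inr w) := by
  simp [sumGraph, sumRel]

@[simp]
theorem joinGraph_adj_inl_inl : (joinGraph G H).Adj (.inl v) (.inl v') ↔ G.Adj v v' := by
  simpa [joinGraph, joinRel, G.adj_comm] using G.ne_of_adj

@[simp]
theorem joinGraph_adj_inr_inr : (joinGraph G H).Adj (.inr w) (.inr w') ↔ H.Adj w w' := by
  simpa [joinGraph, joinRel, H.adj_comm] using H.ne_of_adj

@[simp]
theorem joinGraph_adj_inl_inr : (joinGraph G H).Adj (.inl v) (.inr w) := by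
  simp [joinGraph, joinRel]

def HasUpPairEmbedding (G : SimpleGraph V) (d : ℕ) : Prop :=
  ∃ f : V → Fin d → Sq, Injective f ∧ ∀ v v', v ≠ v' → (G.Adj v v' ↔ UpPair (f v) (f v'))

theorem hasUpPairEmbedding_bot_punit (d : ℕ) : HasUpPairEmbedding (⊥ : SimpleGraph PUnit) d :=
  ⟨fun _ _ => (0, 0), injective_of_subsingleton _, fun v v' h => absurd (Subsingleton.elim v v') h⟩

theorem HasUpPairEmbedding.of_iso {d : ℕ} (e : G ≃g H) (hG : G.HasUpPairEmbedding d) :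
    H.HasUpPairEmbedding d := by
  obtain ⟨f, hf, hfG⟩ := hG
  refine ⟨f ∘ e.symm, hf.comp e.symm.injective, fun w w' hne => ?_⟩
  rw [← e.symm.map_adj_iff]
  exact hfG _ _ (e.symm.injective.ne hne)

theorem HasUpPairEmbedding.sum {d : ℕ} {K : SimpleGraph (V ⊕ W)} {a b : Sq} (hab : a ≠ b)
    (hl : ∀ v v', K.Adj (.inl v) (.inl v') ↔ G.Adj v v')
    (hr : ∀ w w', K.Adj (.inr w) (.inr w') ↔ H.Adj w w')
    (hlr : ∀ v w, K.Adj (.inl v) (.inr w) ↔ a.1 = b.1 ∧ a.2 ≠ b.2)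
    (hG : G.HasUpPairEmbedding d) (hH : H.HasUpPairEmbedding d) :
    K.HasUpPairEmbedding (d + 1) := by
  obtain ⟨f, hf, hfG⟩ := hG
  obtain ⟨g, hg, hgH⟩ := hH
  have cross (v : V) (w : W) :
      K.Adj (.inl v) (.inr w) ↔ UpPair (Fin.cons a (f v)) (Fin.cons b (g w)) := by
    simp [hlr, upPair_cons_iff, hab]
  refine ⟨Sum.elim (fun v => Fin.cons a (f v)) (fun w => Fin.cons b (g w)), ?_, ?_⟩
  · refine ((Fin.cons_right_injective (α := fun _ => Sq) a).comp hf).sumElim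
      ((Fin.cons_right_injective (α := fun _ => Sq) b).comp hg) fun v w h => hab ?_
    simpa using congrFun h 0
  · rintro (v | w) (v' | w') hne
    · simpa [hl, upPair_cons_iff] using hfG v v' (ne_of_apply_ne Sum.inl hne)
    · exact cross v w'
    · rw [K.adj_comm, upPair_comm]
      exact cross v' w
    · simpa [hr, upPair_cons_iff] using hgH w w' (ne_of_apply_ne Sum.inr hne)

theorem HasUpPairEmbedding.sumGraph {d : ℕ} (hG : G.HasUpPairEmbedding d)
    (hH : H.HasUpPairEmbedding d) : (sumGraph G H).HasUpPairEmbedding (d + 1) :=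
  hG.sum (a := (0, 0)) (b := (1, 0)) (by decide) (fun _ _ => sumGraph_adj_inl_inl)
    (fun _ _ => sumGraph_adj_inr_inr) (by simp) hH

theorem HasUpPairEmbedding.joinGraph {d : ℕ} (hG : G.HasUpPairEmbedding d)
    (hH : H.HasUpPairEmbedding d) : (joinGraph G H).HasUpPairEmbedding (d + 1) :=
  hG.sum (a := (0, 0)) (b := (0, 1)) (by decide) (fun _ _ => joinGraph_adj_inl_inl)
    (fun _ _ => joinGraph_adj_inr_inr) (by simp) hH

end SimpleGraph

theorem IsCograph.eventually_hasUpPairEmbedding {V : Type} {G : SimpleGraph V}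
    (hG : IsCograph G) : ∀ᶠ d in atTop, G.HasUpPairEmbedding d := by
  induction hG with
  | single => exact .of_forall SimpleGraph.hasUpPairEmbedding_bot_punit
  | iso e _ ih => exact ih.mono fun _ => .of_iso e
  | coprod _ _ ihG ihH =>
    rw [← map_add_atTop_eq_nat 1]
    exact (ihG.and ihH).mono fun _ h => h.1.sumGraph h.2
  | join _ _ ihG ihH =>
    rw [← map_add_atTop_eq_nat 1]
    exact (ihG.and ihH).mono fun _ h => h.1.joinGraph h.2

/-- Every cograph embeds into some `(2²)^d` so that edges correspond exactly to
up-1-combs and non-edges correspond exactly to wide right-1-combs. -/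
theorem stmt_8 {V : Type} (G : SimpleGraph V) (h : IsCograph G) :
    ∃ (d : ℕ) (f : V → Fin d → Sq), Function.Injective f ∧
      ∀ v₀ v₁ : V, v₀ ≠ v₁ →
        ((G.Adj v₀ v₁ ↔ UpPair (f v₀) (f v₁)) ∧
         (¬ G.Adj v₀ v₁ ↔ WidePair (f v₀) (f v₁))) := by
  obtain ⟨d, f, hf, hfG⟩ := h.eventually_hasUpPairEmbedding.exists
  refine ⟨d, f, hf, fun v₀ v₁ hne => ⟨hfG v₀ v₁ hne, ?_⟩⟩
  rw [widePair_iff_not_upPair (hf.ne hne), hfG v₀ v₁ hne]
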